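/- Let n ≥ 1 and let (d(t), ρ(t)) be a C¹ solution on an interval of the ODE system d' = -(1/n)d² - (ρ - 1), ρ' = -dρ, with ρ(t) > 0. Then the quantity I(d,ρ) := ρ^{-2/n}(d² - nF(ρ)), with F as above, is constant along the solution. -/

import Mathlib

open Real intervalIntegral

noncomputable def I (n : ℕ) (d ρ : ℝ) : ℝ :=
  d^2 * ρ ^ (-(2 : ℝ)/n) - 2 * ∫ r in (1 : ℝ)..ρ, (1 - 1/r) * r ^ (-(2 : ℝ)/n)

/-!
Differentiating along the flow, with `c = -2/n`,
`d/dt I = ρ^c (2 d d' + c d² ρ'/ρ - 2 (1 - 1/ρ) ρ')`, and substituting the system the terms in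
`ρ - 1` cancel, leaving `ρ^c d³ (-2/n - c) = 0`. A function with vanishing derivative on a
convex set is constant there.
-/

theorem Convex.eq_of_forall_hasDerivAt_zero {E : Type*} [NormedAddCommGroup E] [NormedSpace ℝ E]
    {s : Set ℝ} (hs : Convex ℝ s) {f : ℝ → E} (hf : ∀ x ∈ s, HasDerivAt f 0 x) {x y : ℝ}
    (hx : x ∈ s) (hy : y ∈ s) : f x = f y := by
  have h := hs.norm_image_sub_le_of_norm_hasDerivWithin_le (C := 0)
    (fun z hz => (hf z hz).hasDerivWithinAt) (fun _ _ => norm_zero.le) hy hx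
  rw [zero_mul, norm_le_zero_iff, sub_eq_zero] at h
  exact h

theorem hasDerivAt_integral_one_sub_inv_mul_rpow (c : ℝ) {x : ℝ} (hx : 0 < x) :
    HasDerivAt (fun y => ∫ r in (1 : ℝ)..y, (1 - 1 / r) * r ^ c) ((1 - 1 / x) * x ^ c) x := by
  have hcont : ContinuousOn (fun r : ℝ => (1 - 1 / r) * r ^ c) (Set.Ioi 0) :=
    (continuousOn_const.sub (continuousOn_const.div continuousOn_id fun r hr => hr.ne')).mul
      (continuousOn_id.rpow_const fun r hr => Or.inl (ne_of_gt hr))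
  have hsub : Set.uIcc 1 x ⊆ Set.Ioi 0 := fun r hr => (lt_min one_pos hx).trans_le hr.1
  exact integral_hasDerivAt_right ((hcont.mono hsub).intervalIntegrable)
    (hcont.stronglyMeasurableAtFilter isOpen_Ioi x hx) (hcont.continuousAt (Ioi_mem_nhds hx))

theorem HasDerivAt.I_comp (n : ℕ) {d ρ : ℝ → ℝ} {d' ρ' x : ℝ} (hd : HasDerivAt d d' x)
    (hρ : HasDerivAt ρ ρ' x) (hpos : 0 < ρ x) :
    HasDerivAt (fun t => I n (d t) (ρ t))
      (ρ x ^ (-(2 : ℝ) / n) * (2 * d x * d' + -(2 : ℝ) / n * d x ^ 2 * ρ' / ρ x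
        - 2 * (1 - 1 / ρ x) * ρ')) x := by
  set c : ℝ := -(2 : ℝ) / n
  have hpow : HasDerivAt (fun t => ρ t ^ c) (c * ρ x ^ (c - 1) * ρ') x :=
    (hasDerivAt_rpow_const (Or.inl hpos.ne')).comp x hρ
  have hint := (hasDerivAt_integral_one_sub_inv_mul_rpow c hpos).comp x hρ
  refine (((hd.pow 2).mul hpow).sub (hint.const_mul 2)).congr_deriv ?_
  rw [Pi.pow_apply, rpow_sub_one hpos.ne']
  field_simp
  ring

theorem hasDerivAt_I_of_ode (n : ℕ) {d ρ : ℝ → ℝ} {x : ℝ} (hpos : 0 < ρ x)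
    (hd : HasDerivAt d (-(1 / (n : ℝ)) * (d x) ^ 2 - (ρ x - 1)) x)
    (hρ : HasDerivAt ρ (-(d x) * ρ x) x) :
    HasDerivAt (fun t => I n (d t) (ρ t)) 0 x := by
  convert hd.I_comp n hρ hpos using 1
  field_simp
  ring

theorem invariant_constant_general (n : ℕ) (J : Set ℝ) (hJ : Convex ℝ J)
    (d ρ : ℝ → ℝ)
    (hρpos : ∀ t ∈ J, 0 < ρ t)
    (hd : ∀ t ∈ J, HasDerivAt d (-(1/(n : ℝ)) * (d t)^2 - (ρ t - 1)) t)
    (hρ : ∀ t ∈ J, HasDerivAt ρ (-(d t) * ρ t) t) :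
    ∀ s ∈ J, ∀ t ∈ J, I n (d s) (ρ s) = I n (d t) (ρ t) := fun _ hs _ ht =>
  hJ.eq_of_forall_hasDerivAt_zero
    (fun x hx => hasDerivAt_I_of_ode n (hρpos x hx) (hd x hx) (hρ x hx)) hs ht

theorem invariant_constant (n : ℕ) (hn : 1 ≤ n) (J : Set ℝ) (hJ : Convex ℝ J)
    (d ρ : ℝ → ℝ)
    (hρpos : ∀ t ∈ J, 0 < ρ t)
    (hd : ∀ t ∈ J, HasDerivAt d (-(1/(n : ℝ)) * (d t)^2 - (ρ t - 1)) t)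
    (hρ : ∀ t ∈ J, HasDerivAt ρ (-(d t) * ρ t) t) :
    ∀ s ∈ J, ∀ t ∈ J, I n (d s) (ρ s) = I n (d t) (ρ t) :=
  invariant_constant_general n J hJ d ρ hρpos hd hρ
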